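/- arXiv:2304.03447 — 2 statements merged into one kernel-verified Lean document; each statement's English description precedes it below -/
import Mathlib

section
/- Let $V \geq 0$ be smooth, spherically symmetric with compact support in $\mathbb{R}^3$, and let $V_N(x) = N^{3\beta} V(N^\beta x)$. Suppose $w$ solves the zero-energy scattering equation $(-\hbar^2 \Delta + \frac{1}{N} V_N(x))(1 - w(x)) = 0$ with $w(x) \to 0$ as $|x| \to \infty$, given in integral form by $w(x) = \frac{c_0}{2N\hbar^2} \int \frac{1}{|x-y|} V_N(y)(1 - w(y))\,dy$ with $0 \leq 1 - w \leq 1$. Then there exists a constant $C$ depending only on $V$ such that $0 \leq w(x) \leq \frac{C}{N \hbar^2 (|x| + N^{-\beta})}$ for all $x \in \mathbb{R}^3$. -/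
open MeasureTheory Real Set

section ScatteringAux

open Metric
open scoped ENNReal

local notation "E3" => EuclideanSpace ℝ (Fin 3)

/-- Volume of the unit ball in `ℝ³`. -/
noncomputable def scatKappa : ℝ := (volume (Metric.ball (0 : EuclideanSpace ℝ (Fin 3)) 1)).toReal

lemma scatKappa_pos : 0 < scatKappa :=
  ENNReal.toReal_pos (measure_ball_pos _ _ one_pos).ne' measure_ball_lt_top.ne

lemma scat_lint_ball (s : ℝ) (hs : 0 < s) :
    ∫⁻ y in Metric.ball (0 : E3) s, ENNReal.ofReal ‖y‖⁻¹ ≤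
      ENNReal.ofReal ((3/2) * scatKappa * s ^ 2) := by
  have hκfin : volume (Metric.ball (0 : E3) 1) ≠ ⊤ := measure_ball_lt_top.ne
  have hmeas : AEMeasurable (fun y : E3 => ‖y‖⁻¹)
      (volume.restrict (Metric.ball (0 : E3) s)) := (measurable_norm.inv).aemeasurable
  rw [lintegral_eq_lintegral_meas_lt _
    (Filter.Eventually.of_forall fun y => inv_nonneg.2 (norm_nonneg y)) hmeas]
  have key : ∀ t ∈ Ioi (0:ℝ),
      (volume.restrict (Metric.ball (0 : E3) s)) {a | t < ‖a‖⁻¹} ≤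
        ENNReal.ofReal ((min s t⁻¹) ^ 3) * volume (Metric.ball (0 : E3) 1) := by
    intro t ht
    rw [mem_Ioi] at ht
    have h2 : {a : E3 | t < ‖a‖⁻¹} ∩ Metric.ball 0 s ⊆ Metric.ball (0 : E3) (min s t⁻¹) := by
      rintro a ⟨ha1, ha2⟩
      rw [mem_ball_zero_iff] at ha2 ⊢
      refine lt_min ha2 ?_
      rcases eq_or_lt_of_le (norm_nonneg a) with h0 | h0
      · rw [← h0]; exact inv_pos.2 ht
      · rw [← one_div, lt_div_iff₀ ht]
        have hm := mul_lt_mul_of_pos_right ha1 h0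
        rw [inv_mul_cancel₀ h0.ne'] at hm
        linarith
    calc (volume.restrict (Metric.ball (0 : E3) s)) {a | t < ‖a‖⁻¹}
        = volume ({a : E3 | t < ‖a‖⁻¹} ∩ Metric.ball 0 s) := by
          rw [Measure.restrict_apply' measurableSet_ball]
      _ ≤ volume (Metric.ball (0 : E3) (min s t⁻¹)) := measure_mono h2
      _ = ENNReal.ofReal ((min s t⁻¹) ^ 3) * volume (Metric.ball (0 : E3) 1) := by
          rw [Measure.addHaar_ball _ _ (le_min hs.le (inv_pos.2 ht).le)]
          congr 2
          simp [finrank_euclideanSpace_fin]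
  refine (setLIntegral_mono (μ := volume) (s := Ioi (0:ℝ))
      (g := fun t => ENNReal.ofReal ((min s t⁻¹) ^ 3) * volume (Metric.ball (0 : E3) 1))
      (by fun_prop) key).trans ?_
  have hsplit : Ioi (0:ℝ) = Ioc 0 s⁻¹ ∪ Ioi s⁻¹ := (Ioc_union_Ioi_eq_Ioi (inv_pos.2 hs).le).symm
  rw [hsplit, lintegral_union measurableSet_Ioi Ioc_disjoint_Ioi_same]
  have p1 : ∫⁻ t in Ioc (0:ℝ) s⁻¹, ENNReal.ofReal ((min s t⁻¹) ^ 3) * volume (Metric.ball (0 : E3) 1)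
      ≤ ENNReal.ofReal (s ^ 2) * volume (Metric.ball (0 : E3) 1) := by
    have step := setLIntegral_mono (μ := volume) (s := Ioc (0:ℝ) s⁻¹)
      (g := fun _ : ℝ => ENNReal.ofReal (s ^ 3) * volume (Metric.ball (0 : E3) 1))
      (measurable_const) (fun t ht =>
        mul_le_mul_left (ENNReal.ofReal_le_ofReal
          (pow_le_pow_left₀ (le_min hs.le (inv_pos.2 ht.1).le) (min_le_left _ _) 3)) _)
    refine step.trans ?_
    rw [setLIntegral_const, Real.volume_Ioc, sub_zero, mul_right_comm,
      ← ENNReal.ofReal_mul (by positivity)]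
    gcongr
    rw [pow_succ, mul_assoc, mul_inv_cancel₀ hs.ne', mul_one]
  have p2 : ∫⁻ t in Ioi s⁻¹, ENNReal.ofReal ((min s t⁻¹) ^ 3) * volume (Metric.ball (0 : E3) 1)
      ≤ ENNReal.ofReal (s ^ 2 / 2) * volume (Metric.ball (0 : E3) 1) := by
    have hmg : Measurable fun t : ℝ =>
        ENNReal.ofReal (t ^ (-3:ℝ)) * volume (Metric.ball (0 : E3) 1) := by fun_prop
    have step := setLIntegral_mono (μ := volume) (s := Ioi s⁻¹)
      (g := fun t : ℝ => ENNReal.ofReal (t ^ (-3:ℝ)) * volume (Metric.ball (0 : E3) 1))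
      hmg (fun t ht => by
        have ht0 : (0:ℝ) < t := lt_trans (inv_pos.2 hs) ht
        show ENNReal.ofReal ((min s t⁻¹) ^ 3) * volume (Metric.ball (0:E3) 1) ≤
          ENNReal.ofReal (t ^ (-3:ℝ)) * volume (Metric.ball (0:E3) 1)
        refine mul_le_mul_left (ENNReal.ofReal_le_ofReal ?_) _
        have h1 : (min s t⁻¹) ^ 3 ≤ (t⁻¹) ^ 3 :=
          pow_le_pow_left₀ (le_min hs.le (inv_pos.2 ht0).le) (min_le_right _ _) 3
        refine h1.trans_eq ?_
        rw [Real.rpow_neg ht0.le, show (3:ℝ) = ((3:ℕ):ℝ) by norm_num, Real.rpow_natCast, inv_pow])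
    refine step.trans ?_
    have hm1 : Measurable fun t : ℝ => ENNReal.ofReal (t ^ (-3:ℝ)) := by fun_prop
    show ∫⁻ t in Ioi s⁻¹, ENNReal.ofReal (t ^ (-3:ℝ)) * volume (Metric.ball (0:E3) 1) ≤ _
    rw [lintegral_mul_const _ hm1]
    gcongr
    have hint : IntegrableOn (fun t : ℝ => t ^ (-3:ℝ)) (Ioi s⁻¹) :=
      integrableOn_Ioi_rpow_of_lt (by norm_num) (inv_pos.2 hs)
    have hnn : 0 ≤ᵐ[volume.restrict (Ioi s⁻¹)] fun t : ℝ => t ^ (-3:ℝ) := by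
      filter_upwards [ae_restrict_mem measurableSet_Ioi] with t ht
      exact Real.rpow_nonneg (le_of_lt (lt_trans (inv_pos.2 hs) ht)) _
    rw [← ofReal_integral_eq_lintegral_ofReal hint hnn]
    have hval : ∫ t in Ioi s⁻¹, t ^ (-3:ℝ) = s ^ 2 / 2 := by
      rw [integral_Ioi_rpow_of_lt (by norm_num) (inv_pos.2 hs)]
      norm_num
    rw [hval]
  calc _ ≤ ENNReal.ofReal (s ^ 2) * volume (Metric.ball (0 : E3) 1)
        + ENNReal.ofReal (s ^ 2 / 2) * volume (Metric.ball (0 : E3) 1) := add_le_add p1 p2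
    _ = ENNReal.ofReal (s ^ 2 + s ^ 2 / 2) * volume (Metric.ball (0 : E3) 1) := by
        rw [← add_mul, ← ENNReal.ofReal_add (by positivity) (by positivity)]
    _ ≤ _ := by
        conv_lhs => rw [← ENNReal.ofReal_toReal hκfin]
        rw [← ENNReal.ofReal_mul (by positivity)]
        exact ENNReal.ofReal_le_ofReal (le_of_eq (by rw [scatKappa]; ring))

lemma scat_lint_ball_near (x : E3) (r : ℝ) (hr : 0 < r) (hx : ‖x‖ < 2*r) :
    ∫⁻ y in Metric.ball (0 : E3) r, ENNReal.ofReal ‖x - y‖⁻¹ ≤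
      ENNReal.ofReal ((3/2) * scatKappa * (3*r) ^ 2) := by
  set g : E3 → ℝ≥0∞ := (Metric.ball (0 : E3) (3*r)).indicator
      (fun z => ENNReal.ofReal ‖z‖⁻¹) with hg
  have hgm : Measurable g := by
    apply Measurable.indicator ?_ measurableSet_ball
    fun_prop
  have h1 : ∫⁻ y in Metric.ball (0 : E3) r, ENNReal.ofReal ‖x - y‖⁻¹ ≤ ∫⁻ y, g (x - y) := by
    rw [← lintegral_indicator measurableSet_ball]
    refine lintegral_mono fun y => ?_
    by_cases hy : y ∈ Metric.ball (0 : E3) r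
    · rw [indicator_of_mem hy]
      have hmem : x - y ∈ Metric.ball (0 : E3) (3*r) := by
        rw [mem_ball_zero_iff] at hy ⊢
        calc ‖x - y‖ ≤ ‖x‖ + ‖y‖ := norm_sub_le _ _
          _ < 3*r := by linarith
      rw [hg, indicator_of_mem hmem]
    · rw [indicator_of_notMem hy]; exact zero_le
  have h2 : ∫⁻ y, g (x - y) = ∫⁻ y, g y :=
    (Measure.measurePreserving_sub_left (volume : Measure E3) x).lintegral_comp hgm
  calc _ ≤ ∫⁻ y, g y := h1.trans_eq h2
    _ = ∫⁻ y in Metric.ball (0 : E3) (3*r), ENNReal.ofReal ‖y‖⁻¹ :=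
        lintegral_indicator measurableSet_ball _
    _ ≤ _ := scat_lint_ball _ (by linarith)

/-- The constant in the key Riesz-potential estimate. -/
noncomputable def scatK : ℝ := 3 * scatKappa + 27 * ((3/2) * scatKappa)

lemma scatK_pos : 0 < scatK := by
  have := scatKappa_pos; unfold scatK; linarith

/-- Key estimate: the Riesz potential of a ball. -/
lemma scat_key (x : E3) (r : ℝ) (hr : 0 < r) :
    ∫⁻ y in Metric.ball (0 : E3) r, ENNReal.ofReal ‖x - y‖⁻¹ ≤
      ENNReal.ofReal (scatK * r ^ 3 / (‖x‖ + r)) := by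
  have hκ := scatKappa_pos
  have hxr : 0 < ‖x‖ + r := by have := norm_nonneg x; linarith
  by_cases hfar : 2*r ≤ ‖x‖
  · -- far field
    have hpt : ∀ y ∈ Metric.ball (0 : E3) r,
        ENNReal.ofReal ‖x - y‖⁻¹ ≤ ENNReal.ofReal (3 / (‖x‖ + r)) := by
      intro y hy
      rw [mem_ball_zero_iff] at hy
      have hsub : ‖x‖ - ‖y‖ ≤ ‖x - y‖ := norm_sub_norm_le _ _
      apply ENNReal.ofReal_le_ofReal
      calc ‖x - y‖⁻¹ ≤ ((‖x‖ + r)/3)⁻¹ := by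
            apply inv_anti₀ (by positivity)
            linarith
        _ = 3 / (‖x‖ + r) := by rw [inv_div]
    have step := setLIntegral_mono (μ := volume) (s := Metric.ball (0 : E3) r)
      (g := fun _ : E3 => ENNReal.ofReal (3 / (‖x‖ + r))) measurable_const hpt
    refine step.trans ?_
    rw [setLIntegral_const, Measure.addHaar_ball _ _ hr.le]
    rw [show Module.finrank ℝ (EuclideanSpace ℝ (Fin 3)) = 3 from finrank_euclideanSpace_fin,
      ← ENNReal.ofReal_toReal (measure_ball_lt_top
        (x := (0:E3)) (r := 1)).ne, ← ENNReal.ofReal_mul (by positivity),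
      ← ENNReal.ofReal_mul (by positivity)]
    apply ENNReal.ofReal_le_ofReal
    rw [div_mul_eq_mul_div, div_le_div_iff₀ hxr hxr]
    have hks : (3:ℝ) * scatKappa ≤ scatK := by unfold scatK; nlinarith
    rw [show (volume (Metric.ball (0:E3) 1)).toReal = scatKappa from rfl]
    nlinarith [mul_le_mul_of_nonneg_right hks
      (by positivity : (0:ℝ) ≤ r^3*(‖x‖+r)), scatKappa_pos]
  · -- near field
    push_neg at hfar
    refine (scat_lint_ball_near x r hr hfar).trans (ENNReal.ofReal_le_ofReal ?_)
    rw [le_div_iff₀ hxr]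
    unfold scatK
    nlinarith [mul_le_mul_of_nonneg_left (show ‖x‖ + r ≤ 3*r by linarith)
      (by positivity : (0:ℝ) ≤ 3/2 * scatKappa * (3*r)^2)]
end ScatteringAux

/-- **Scattering function upper bound.**
If `w` solves the zero-energy scattering equation in integral form with
`0 ≤ 1 - w ≤ 1`, then `0 ≤ w(x) ≤ C / (N hb² (|x| + N^{-β}))` for a constant
`C` depending only on `V` (and the fixed constant `c₀`). -/
theorem scattering_function_bound
    (V : EuclideanSpace ℝ (Fin 3) → ℝ)
    (hV_smooth : ContDiff ℝ (⊤ : ℕ∞) V)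
    (hV_nonneg : ∀ x, 0 ≤ V x)
    (hV_supp : HasCompactSupport V)
    (hV_rad : ∀ x y : EuclideanSpace ℝ (Fin 3), ‖x‖ = ‖y‖ → V x = V y)
    (c₀ : ℝ) (hc₀ : 0 < c₀) :
    ∃ C > 0, ∀ (N hb β : ℝ), 1 ≤ N → 0 < hb → β ∈ Set.Ioo (0 : ℝ) 1 →
      ∀ w : EuclideanSpace ℝ (Fin 3) → ℝ,
        (∀ x, 0 ≤ 1 - w x ∧ 1 - w x ≤ 1) →
        (∀ x, w x = c₀ / (2 * N * hb ^ 2) *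
            ∫ y, (1 / ‖x - y‖) * (N ^ (3 * β) * V ((N ^ β : ℝ) • y)) * (1 - w y)) →
        ∀ x, 0 ≤ w x ∧ w x ≤ C / (N * hb ^ 2 * (‖x‖ + N ^ (-β))) := by
  classical
  obtain ⟨R₀, hR₀⟩ := hV_supp.isBounded.subset_closedBall 0
  set R : ℝ := max R₀ 0 with hRdef
  have hR0 : 0 ≤ R := le_max_right _ _
  have hRsupp : ∀ z : EuclideanSpace ℝ (Fin 3), R < ‖z‖ → V z = 0 := by
    intro z hz
    apply image_eq_zero_of_notMem_tsupport
    intro hmem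
    have h := hR₀ hmem
    rw [Metric.mem_closedBall, dist_zero_right] at h
    exact absurd (h.trans (le_max_left _ _)) (not_le.2 hz)
  obtain ⟨M₀, hM₀⟩ := hV_supp.exists_bound_of_continuous hV_smooth.continuous
  set M : ℝ := max M₀ 1 with hMdef
  have hMpos : (0:ℝ) < M := lt_of_lt_of_le one_pos (le_max_right _ _)
  have hVM : ∀ z, V z ≤ M := fun z =>
    (le_abs_self _).trans (((Real.norm_eq_abs _) ▸ hM₀ z).trans (le_max_left _ _))
  set A : ℝ := M * scatK * (R+1)^3 with hAdef
  have hApos : 0 < A := by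
    have := scatK_pos
    apply mul_pos (mul_pos hMpos scatK_pos)
    positivity
  refine ⟨c₀ * A / 2, by positivity, ?_⟩
  intro N hb β hN hhb hβ w hw hweq x
  have hN0 : (0:ℝ) < N := lt_of_lt_of_le one_pos hN
  have hNmb : (0:ℝ) < N ^ (-β) := Real.rpow_pos_of_pos hN0 _
  have hNb : (0:ℝ) < N ^ β := Real.rpow_pos_of_pos hN0 _
  set r : ℝ := (R+1) * N ^ (-β) with hrdef
  have hrpos : 0 < r := by positivity
  have hw0 : 0 ≤ w x := by linarith [(hw x).2]
  refine ⟨hw0, ?_⟩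
  set f : EuclideanSpace ℝ (Fin 3) → ℝ :=
    fun y => (1 / ‖x - y‖) * (N ^ (3 * β) * V ((N ^ β : ℝ) • y)) * (1 - w y) with hfdef
  have hN3b : (0:ℝ) ≤ N ^ (3*β) := (Real.rpow_pos_of_pos hN0 _).le
  have hf0 : ∀ y, 0 ≤ f y := by
    intro y
    apply mul_nonneg (mul_nonneg (by positivity) (mul_nonneg hN3b (hV_nonneg _))) (hw y).1
  have hdenom : 0 < N * hb ^ 2 * (‖x‖ + N ^ (-β)) := by
    have := norm_nonneg x; positivity
  by_cases hInt : Integrable f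
  swap
  · rw [hweq x, show (∫ y, (1 / ‖x - y‖) * (N ^ (3 * β) * V ((N ^ β : ℝ) • y)) * (1 - w y)) = ∫ y, f y from rfl,
      integral_undef hInt, mul_zero]
    positivity
  -- main case
  have hNbr : N ^ β * r = R + 1 := by
    rw [hrdef, ← mul_assoc, mul_comm (N ^ β), mul_assoc, ← Real.rpow_add hN0]
    simp
  have hvanish : ∀ y : EuclideanSpace ℝ (Fin 3), y ∉ Metric.ball 0 r → f y = 0 := by
    intro y hy
    rw [mem_ball_zero_iff, not_lt] at hy
    have hnorm : R < ‖(N ^ β : ℝ) • y‖ := by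
      rw [norm_smul, Real.norm_eq_abs, abs_of_pos hNb]
      have : N ^ β * r ≤ N ^ β * ‖y‖ := mul_le_mul_of_nonneg_left hy hNb.le
      rw [hNbr] at this
      linarith
    rw [hfdef]
    simp [hRsupp _ hnorm]
  have hpt : ∀ y, ENNReal.ofReal (f y) ≤
      (Metric.ball (0 : EuclideanSpace ℝ (Fin 3)) r).indicator
        (fun y => ENNReal.ofReal (N ^ (3*β) * M) * ENNReal.ofReal ‖x - y‖⁻¹) y := by
    intro y
    by_cases hy : y ∈ Metric.ball (0 : EuclideanSpace ℝ (Fin 3)) r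
    · rw [indicator_of_mem hy, ← ENNReal.ofReal_mul (by positivity)]
      apply ENNReal.ofReal_le_ofReal
      rw [hfdef]
      have h1 : (1:ℝ) / ‖x - y‖ = ‖x - y‖⁻¹ := one_div _
      calc (1 / ‖x - y‖) * (N ^ (3 * β) * V ((N ^ β : ℝ) • y)) * (1 - w y)
          ≤ (1 / ‖x - y‖) * (N ^ (3 * β) * M) * 1 := by
            apply mul_le_mul
            · apply mul_le_mul_of_nonneg_left _ (by positivity)
              exact mul_le_mul_of_nonneg_left (hVM _) hN3b
            · exact (hw y).2
            · exact (hw y).1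
            · positivity
        _ = N ^ (3*β) * M * ‖x - y‖⁻¹ := by rw [h1]; ring
    · rw [indicator_of_notMem hy, hvanish y hy]
      simp
  have hkey := scat_key x r hrpos
  have hbound : ∫ y, f y ≤ A / (‖x‖ + r) := by
    rw [integral_eq_lintegral_of_nonneg_ae (Filter.Eventually.of_forall hf0)
      hInt.aestronglyMeasurable]
    have hlin : ∫⁻ y, ENNReal.ofReal (f y) ≤
        ENNReal.ofReal (N ^ (3*β) * M) * ENNReal.ofReal (scatK * r ^ 3 / (‖x‖ + r)) := by
      calc ∫⁻ y, ENNReal.ofReal (f y)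
          ≤ ∫⁻ y, (Metric.ball (0 : EuclideanSpace ℝ (Fin 3)) r).indicator
              (fun y => ENNReal.ofReal (N ^ (3*β) * M) * ENNReal.ofReal ‖x - y‖⁻¹) y :=
            lintegral_mono hpt
        _ = ∫⁻ y in Metric.ball (0 : EuclideanSpace ℝ (Fin 3)) r,
              ENNReal.ofReal (N ^ (3*β) * M) * ENNReal.ofReal ‖x - y‖⁻¹ :=
            lintegral_indicator measurableSet_ball _
        _ = ENNReal.ofReal (N ^ (3*β) * M) *
              ∫⁻ y in Metric.ball (0 : EuclideanSpace ℝ (Fin 3)) r, ENNReal.ofReal ‖x - y‖⁻¹ :=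
            lintegral_const_mul _ (by fun_prop)
        _ ≤ _ := mul_le_mul_right hkey _
    have hnn1 : (0:ℝ) ≤ N ^ (3*β) * M := mul_nonneg hN3b hMpos.le
    have hnn2 : (0:ℝ) ≤ scatK * r ^ 3 / (‖x‖ + r) := by
      have h1 := scatK_pos
      have h2 := norm_nonneg x
      positivity
    rw [← ENNReal.ofReal_mul hnn1] at hlin
    refine (ENNReal.toReal_mono ENNReal.ofReal_ne_top hlin).trans ?_
    rw [ENNReal.toReal_ofReal (mul_nonneg hnn1 hnn2)]
    have hr3 : N ^ (3*β) * r ^ 3 = (R+1)^3 := by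
      have : (N ^ β * r) ^ 3 = (R+1) ^ 3 := by rw [hNbr]
      rw [mul_pow] at this
      have hb3 : (N ^ β) ^ 3 = N ^ (3*β) := by
        rw [← Real.rpow_natCast (N ^ β) 3, ← Real.rpow_mul hN0.le]
        norm_num [mul_comm]
      rw [hb3] at this
      linarith
    apply le_of_eq
    calc N ^ (3*β) * M * (scatK * r ^ 3 / (‖x‖ + r))
        = M * scatK * (N ^ (3*β) * r ^ 3) / (‖x‖ + r) := by ring
      _ = A / (‖x‖ + r) := by rw [hr3, hAdef]
  have hc : 0 ≤ c₀ / (2*N*hb^2) := by positivity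
  have hrge : N ^ (-β) ≤ r := by
    rw [hrdef]
    exact le_mul_of_one_le_left hNmb.le (by linarith)
  have hxpos : (0:ℝ) < ‖x‖ + N ^ (-β) := by have := norm_nonneg x; positivity
  rw [hweq x, show (∫ y, (1 / ‖x - y‖) * (N ^ (3 * β) * V ((N ^ β : ℝ) • y)) * (1 - w y))
      = ∫ y, f y from rfl]
  calc c₀ / (2*N*hb^2) * ∫ y, f y
      ≤ c₀ / (2*N*hb^2) * (A / (‖x‖ + r)) := mul_le_mul_of_nonneg_left hbound hc
    _ ≤ c₀ / (2*N*hb^2) * (A / (‖x‖ + N ^ (-β))) := by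
        apply mul_le_mul_of_nonneg_left _ hc
        apply div_le_div_of_nonneg_left hApos.le hxpos (by linarith)
    _ = (c₀ * A / 2) / (N * hb ^ 2 * (‖x‖ + N ^ (-β))) := by
        field_simp
end

section
/- Under the same hypotheses on the scattering function $w$ (integral representation $w(x) = \frac{c_0}{2N\hbar^2} \int \frac{1}{|x-y|} V_N(y)(1 - w(y))\,dy$ with $0 \leq 1-w \leq 1$, $V \geq 0$ smooth compactly supported), there exists $C$ depending only on $V$ such that $|\nabla w(x)| \leq \frac{C}{N \hbar^2 (|x|^2 + N^{-2\beta})}$ for all $x \in \mathbb{R}^3$. -/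
open MeasureTheory Real Set Metric

local notation "E3" => EuclideanSpace ℝ (Fin 3)

lemma my_lintegral_fun_norm (f : ℝ → ENNReal) (hf : Measurable f) :
    ∫⁻ x : E3, f ‖x‖ = volume (Metric.ball (0:E3) 1) *
      (3 * ∫⁻ y in Ioi (0:ℝ), ENNReal.ofReal (y ^ 2) * f y) := by
  have hdim : Module.finrank ℝ E3 = 3 := finrank_euclideanSpace_fin
  have h0 : ∫⁻ x : E3, f ‖x‖ = ∫⁻ x in ({0}ᶜ : Set E3), f ‖x‖ := by
    rw [MeasureTheory.restrict_compl_singleton]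
  have hmeas : MeasurableSet ({0}ᶜ : Set E3) := (measurableSet_singleton 0).compl
  have h1 : ∫⁻ x in ({0}ᶜ : Set E3), f ‖x‖ =
      ∫⁻ x : ({0}ᶜ : Set E3), f ‖x.1‖ ∂((volume : Measure E3).comap Subtype.val) := by
    rw [← Measure.restrict_univ (μ := (volume : Measure E3).comap Subtype.val),
      setLIntegral_subtype hmeas univ (fun a => f ‖a‖), Subtype.coe_image_univ]
  have hpres := (volume : Measure E3).measurePreserving_homeomorphUnitSphereProd
  have h2 : ∫⁻ x : ({0}ᶜ : Set E3), f ‖x.1‖ ∂((volume : Measure E3).comap Subtype.val) =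
      ∫⁻ p : sphere (0:E3) 1 × Ioi (0:ℝ), f p.2
        ∂((volume : Measure E3).toSphere.prod (.volumeIoiPow (Module.finrank ℝ E3 - 1))) := by
    rw [← hpres.lintegral_comp_emb (Homeomorph.measurableEmbedding _) (fun p => f p.2)]
    simp
  have hfc : Measurable (fun y : Ioi (0:ℝ) => f y.1) := hf.comp measurable_subtype_coe
  have h3 : ∫⁻ p : sphere (0:E3) 1 × Ioi (0:ℝ), f p.2
        ∂((volume : Measure E3).toSphere.prod (.volumeIoiPow (Module.finrank ℝ E3 - 1))) =
      (volume : Measure E3).toSphere univ *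
        ∫⁻ y : Ioi (0:ℝ), f y.1 ∂(Measure.volumeIoiPow (Module.finrank ℝ E3 - 1)) := by
    rw [← lintegral_map hfc measurable_snd, Measure.map_snd_prod, lintegral_smul_measure, smul_eq_mul]
  have h4 : ∫⁻ y : Ioi (0:ℝ), f y.1 ∂(Measure.volumeIoiPow (Module.finrank ℝ E3 - 1)) =
      ∫⁻ y in Ioi (0:ℝ), ENNReal.ofReal (y ^ 2) * f y := by
    rw [Measure.volumeIoiPow,
      lintegral_withDensity_eq_lintegral_mul _
        ((measurable_subtype_coe.pow_const _).ennreal_ofReal) hfc]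
    simp only [Pi.mul_apply]
    rw [← Measure.restrict_univ (μ := (volume : Measure ℝ).comap (Subtype.val : Ioi (0:ℝ) → ℝ)),
      setLIntegral_subtype measurableSet_Ioi univ (fun y => ENNReal.ofReal (y ^ (Module.finrank ℝ E3 - 1)) * f y),
      Subtype.coe_image_univ, hdim]
  have h5 : (volume : Measure E3).toSphere univ = 3 * volume (Metric.ball (0:E3) 1) := by
    rw [Measure.toSphere_apply_univ, hdim]; norm_num
  rw [h0, h1, h2, h3, h4, h5]; ring

lemma my_lintegral_inv_sq_closedBall {ρ : ℝ} (hρ : 0 < ρ) :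
    ∫⁻ y in Metric.closedBall (0:E3) ρ, ENNReal.ofReal ((‖y‖ ^ 2)⁻¹) =
      volume (Metric.ball (0:E3) 1) * (3 * ENNReal.ofReal ρ) := by
  classical
  set f : ℝ → ENNReal := fun t => if t ≤ ρ then ENNReal.ofReal ((t ^ 2)⁻¹) else 0 with hfdef
  have hfm : Measurable f := by
    apply Measurable.ite measurableSet_Iic
    · exact ((measurable_id.pow_const 2).inv).ennreal_ofReal
    · exact measurable_const
  have h1 : ∀ y : E3, f ‖y‖ =
      (Metric.closedBall (0:E3) ρ).indicator (fun y => ENNReal.ofReal ((‖y‖ ^ 2)⁻¹)) y := by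
    intro y
    by_cases h : ‖y‖ ≤ ρ
    · simp [hfdef, h, indicator, mem_closedBall_zero_iff.mpr h]
    · have : y ∉ Metric.closedBall (0:E3) ρ := by
        simpa [mem_closedBall_zero_iff] using h
      simp [hfdef, h, indicator, this]
  have h2 : ∫⁻ y in Metric.closedBall (0:E3) ρ, ENNReal.ofReal ((‖y‖ ^ 2)⁻¹) =
      ∫⁻ y : E3, f ‖y‖ := by
    rw [← lintegral_indicator measurableSet_closedBall]
    exact lintegral_congr fun y => (h1 y).symm
  rw [h2, my_lintegral_fun_norm f hfm]
  congr 1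
  congr 1
  have h3 : ∀ y ∈ Ioi (0:ℝ), ENNReal.ofReal (y ^ 2) * f y =
      (Iic ρ).indicator (fun _ => (1:ENNReal)) y := by
    intro y hy
    have hy0 : (0:ℝ) < y := hy
    by_cases h : y ≤ ρ
    · simp only [hfdef, if_pos h, indicator, mem_Iic, h, if_true]
      rw [← ENNReal.ofReal_mul (by positivity), mul_inv_cancel₀ (by positivity)]
      simp
    · simp [hfdef, h, indicator]
  rw [setLIntegral_congr_fun measurableSet_Ioi h3,
    lintegral_indicator measurableSet_Iic]
  simp only [lintegral_const, Measure.restrict_restrict measurableSet_Iic,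
    Measure.restrict_apply MeasurableSet.univ, univ_inter]
  rw [Set.Iic_inter_Ioi, Real.volume_Ioc]
  simp [hρ.le]

lemma my_integrableOn_inv_sq_zero {ρ : ℝ} (hρ : 0 < ρ) :
    IntegrableOn (fun y : E3 => (‖y‖ ^ 2)⁻¹) (Metric.closedBall (0:E3) ρ) := by
  refine ⟨((measurable_norm.pow_const 2).inv).aestronglyMeasurable, ?_⟩
  rw [hasFiniteIntegral_iff_ofReal (Filter.Eventually.of_forall fun y => by positivity)]
  rw [my_lintegral_inv_sq_closedBall hρ]
  exact ENNReal.mul_lt_top measure_ball_lt_top (by simp [ENNReal.ofReal_lt_top, ENNReal.mul_lt_top])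

lemma my_setIntegral_inv_sq_zero {ρ : ℝ} (hρ : 0 < ρ) :
    ∫ y in Metric.closedBall (0:E3) ρ, (‖y‖ ^ 2)⁻¹ =
      3 * (volume (Metric.ball (0:E3) 1)).toReal * ρ := by
  rw [integral_eq_lintegral_of_nonneg_ae (f := fun y : E3 => (‖y‖ ^ 2)⁻¹) (Filter.Eventually.of_forall fun y => by positivity)
    ((measurable_norm.pow_const 2).inv).aestronglyMeasurable]
  rw [my_lintegral_inv_sq_closedBall hρ, ENNReal.toReal_mul, ENNReal.toReal_mul,
    ENNReal.toReal_ofReal hρ.le]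
  norm_num
  ring

lemma my_image_sub_closedBall (x : E3) (ρ : ℝ) :
    (fun u => x - u) '' Metric.closedBall (0:E3) ρ = Metric.closedBall x ρ := by
  ext y
  simp only [mem_image, Metric.mem_closedBall, dist_eq_norm]
  constructor
  · rintro ⟨u, hu, rfl⟩
    simpa [norm_sub_rev] using hu
  · intro hy
    exact ⟨x - y, by simpa [norm_sub_rev] using hy, by abel⟩

lemma my_integrableOn_inv_sq (x : E3) {ρ : ℝ} (hρ : 0 < ρ) :
    IntegrableOn (fun y : E3 => (‖x - y‖ ^ 2)⁻¹) (Metric.closedBall x ρ) := by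
  have hemb : MeasurableEmbedding (fun u : E3 => x - u) :=
    (Homeomorph.subLeft x).measurableEmbedding
  have hmp := ((Measure.measurePreserving_sub_left (volume : Measure E3) x).restrict_image_emb
    hemb (Metric.closedBall (0:E3) ρ))
  rw [my_image_sub_closedBall] at hmp
  have h := (hmp.integrable_comp_emb hemb (g := fun y : E3 => (‖x - y‖ ^ 2)⁻¹)).1
  have hcomp : ((fun y : E3 => (‖x - y‖ ^ 2)⁻¹) ∘ (fun u : E3 => x - u)) =
      fun u : E3 => (‖u‖ ^ 2)⁻¹ := by
    funext u; simp [sub_sub_cancel]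
  rw [hcomp] at h
  exact h (my_integrableOn_inv_sq_zero hρ)

lemma my_setIntegral_inv_sq (x : E3) {ρ : ℝ} (hρ : 0 < ρ) :
    ∫ y in Metric.closedBall x ρ, (‖x - y‖ ^ 2)⁻¹ =
      3 * (volume (Metric.ball (0:E3) 1)).toReal * ρ := by
  have hemb : MeasurableEmbedding (fun u : E3 => x - u) :=
    (Homeomorph.subLeft x).measurableEmbedding
  have := (Measure.measurePreserving_sub_left (volume : Measure E3) x).setIntegral_image_emb
    hemb (fun y : E3 => (‖x - y‖ ^ 2)⁻¹) (Metric.closedBall (0:E3) ρ)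
  rw [my_image_sub_closedBall] at this
  rw [this, ← my_setIntegral_inv_sq_zero hρ]
  congr 1
  funext u
  simp [sub_sub_cancel]

lemma my_subset_ball (x : E3) (r : ℝ) :
    Metric.closedBall (0:E3) r ⊆ Metric.closedBall x (‖x‖ + r) := by
  intro y hy
  rw [Metric.mem_closedBall, dist_eq_norm]
  calc ‖y - x‖ ≤ ‖y‖ + ‖x‖ := norm_sub_le _ _
  _ ≤ r + ‖x‖ := by
      have := mem_closedBall_zero_iff.mp hy; linarith
  _ = ‖x‖ + r := by ring

lemma my_I2_integrable (x : E3) {r : ℝ} (hr : 0 < r) :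
    IntegrableOn (fun y : E3 => (‖x - y‖ ^ 2)⁻¹) (Metric.closedBall (0:E3) r) :=
  (my_integrableOn_inv_sq x (by positivity : (0:ℝ) < ‖x‖ + r)).mono_set (my_subset_ball x r)

lemma my_I2_bound (x : E3) {r : ℝ} (hr : 0 < r) :
    ∫ y in Metric.closedBall (0:E3) r, (‖x - y‖ ^ 2)⁻¹ ≤
      45 * (volume (Metric.ball (0:E3) 1)).toReal * r ^ 3 / (r ^ 2 + ‖x‖ ^ 2) := by
  set v := (volume (Metric.ball (0:E3) 1)).toReal with hvdef
  have hv : 0 < v := ENNReal.toReal_pos (measure_ball_pos volume (0:E3) one_pos).ne' measure_ball_lt_top.ne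
  have hxpos : (0:ℝ) < ‖x‖ + r := by positivity
  by_cases hcase : ‖x‖ ≤ 2 * r
  · have h1 : ∫ y in Metric.closedBall (0:E3) r, (‖x - y‖ ^ 2)⁻¹ ≤
        ∫ y in Metric.closedBall x (‖x‖ + r), (‖x - y‖ ^ 2)⁻¹ := by
      apply setIntegral_mono_set (my_integrableOn_inv_sq x hxpos)
        (Filter.Eventually.of_forall fun y => by positivity)
      exact Filter.Eventually.of_forall fun y hy => my_subset_ball x r hy
    rw [my_setIntegral_inv_sq x hxpos, ← hvdef] at h1
    refine h1.trans ?_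
    rw [le_div_iff₀ (by positivity)]
    have key : (‖x‖ + r) * (r ^ 2 + ‖x‖ ^ 2) ≤ 15 * r ^ 3 := by
      have h0 : (0:ℝ) ≤ ‖x‖ := norm_nonneg x
      have h2 : ‖x‖ ^ 2 ≤ (2 * r) ^ 2 := pow_le_pow_left₀ h0 hcase 2
      have h3 : ‖x‖ ^ 3 ≤ (2 * r) ^ 3 := pow_le_pow_left₀ h0 hcase 3
      nlinarith [mul_le_mul_of_nonneg_right h2 hr.le, mul_le_mul_of_nonneg_right hcase (sq_nonneg r)]
    nlinarith [mul_le_mul_of_nonneg_left key hv.le]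
  · push_neg at hcase
    have hnx : (0:ℝ) < ‖x‖ := lt_trans (by positivity) hcase
    have hpt : ∀ y ∈ Metric.closedBall (0:E3) r, (‖x - y‖ ^ 2)⁻¹ ≤ 4 / ‖x‖ ^ 2 := by
      intro y hy
      have hy' : ‖y‖ ≤ r := mem_closedBall_zero_iff.mp hy
      have hlow : ‖x‖ / 2 ≤ ‖x - y‖ := by
        have := norm_sub_norm_le x y
        linarith [norm_sub_norm_le x y]
      have h2 : ‖x‖ ^ 2 / 4 ≤ ‖x - y‖ ^ 2 := by nlinarith [norm_nonneg (x - y)]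
      rw [div_eq_mul_inv]
      have h3 : (‖x - y‖ ^ 2)⁻¹ ≤ (‖x‖ ^ 2 / 4)⁻¹ :=
        inv_anti₀ (by positivity) h2
      calc (‖x - y‖ ^ 2)⁻¹ ≤ (‖x‖ ^ 2 / 4)⁻¹ := h3
      _ = 4 * (‖x‖ ^ 2)⁻¹ := by field_simp
    have h1 : ∫ y in Metric.closedBall (0:E3) r, (‖x - y‖ ^ 2)⁻¹ ≤
        ∫ _y in Metric.closedBall (0:E3) r, (4 / ‖x‖ ^ 2) := by
      have hpt' : ∀ y ∈ Metric.closedBall (0:E3) r, (‖x - y‖ ^ 2)⁻¹ ≤ 4 / ‖x‖ ^ 2 := hpt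
      exact
      setIntegral_mono_on (my_I2_integrable x hr)
        (integrableOn_const measure_closedBall_lt_top.ne) measurableSet_closedBall hpt
    rw [setIntegral_const, smul_eq_mul] at h1
    have hvol : (volume (Metric.closedBall (0:E3) r)).toReal = r ^ 3 * v := by
      rw [Measure.addHaar_closedBall _ _ hr.le, ENNReal.toReal_mul, ENNReal.toReal_ofReal
        (by positivity), finrank_euclideanSpace_fin]
    rw [measureReal_def, hvol] at h1
    refine h1.trans ?_
    rw [show r ^ 3 * v * (4 / ‖x‖ ^ 2) = 4 * (r ^ 3 * v) / ‖x‖ ^ 2 by ring]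
    rw [div_le_div_iff₀ (by positivity : (0:ℝ) < ‖x‖ ^ 2) (by positivity : (0:ℝ) < r ^ 2 + ‖x‖ ^ 2)]
    have key : 4 * (r ^ 2 + ‖x‖ ^ 2) ≤ 45 * ‖x‖ ^ 2 := by nlinarith
    nlinarith [mul_le_mul_of_nonneg_left key (mul_nonneg (pow_pos hr 3).le hv.le)]

lemma my_inv_le_inv_sq_add_one {t : ℝ} (ht : 0 ≤ t) : t⁻¹ ≤ (t ^ 2)⁻¹ + 1 := by
  rcases eq_or_lt_of_le ht with h | h
  · simp [← h]
  · by_cases h1 : t ≤ 1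
    · have h2 : t ^ 2 ≤ t := by nlinarith
      have := inv_anti₀ (by positivity : (0:ℝ) < t ^ 2) h2
      linarith [inv_nonneg.mpr ht]
    · push_neg at h1
      have h2 : t⁻¹ ≤ 1 := by
        rw [inv_le_one_iff₀]; right; linarith
      have : (0:ℝ) ≤ (t ^ 2)⁻¹ := by positivity
      linarith

lemma my_kernel_diff (x x' y : E3) (hx : y ≠ x) (hx' : y ≠ x') :
    |‖x' - y‖⁻¹ - ‖x - y‖⁻¹| ≤
      ‖x' - x‖ * (((‖x - y‖ ^ 2)⁻¹ + (‖x' - y‖ ^ 2)⁻¹) / 2) := by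
  set a := ‖x' - y‖ with hadef
  set b := ‖x - y‖ with hbdef
  have ha : 0 < a := by rw [hadef, norm_pos_iff]; exact sub_ne_zero.mpr (Ne.symm hx')
  have hb : 0 < b := by rw [hbdef, norm_pos_iff]; exact sub_ne_zero.mpr (Ne.symm hx)
  have hd : |b - a| ≤ ‖x' - x‖ := by
    have h1 := abs_norm_sub_norm_le (x - y) (x' - y)
    have h2 : (x - y) - (x' - y) = x - x' := by abel
    rw [h2] at h1
    rwa [norm_sub_rev x x'] at h1
  have heq : a⁻¹ - b⁻¹ = (b - a) * (a * b)⁻¹ := by field_simp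
  have habs : |a⁻¹ - b⁻¹| = |b - a| * (a * b)⁻¹ := by
    rw [heq, abs_mul, abs_of_pos (by positivity : (0:ℝ) < (a * b)⁻¹)]
  have hq : (a * b)⁻¹ ≤ ((b ^ 2)⁻¹ + (a ^ 2)⁻¹) / 2 := by
    have := two_mul_le_add_sq a⁻¹ b⁻¹
    rw [inv_pow, inv_pow] at this
    have h3 : a⁻¹ * b⁻¹ = (a * b)⁻¹ := (mul_inv a b).symm
    nlinarith
  rw [habs]
  exact mul_le_mul hd hq (by positivity) (norm_nonneg _)

lemma my_fivebound (x x' : E3) {r : ℝ} (hr : 0 < r) (hxx : ‖x' - x‖ ≤ r / 2) :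
    r ^ 2 + ‖x‖ ^ 2 ≤ 5 * (r ^ 2 + ‖x'‖ ^ 2) := by
  have h1 : |‖x‖ - ‖x'‖| ≤ ‖x - x'‖ := abs_norm_sub_norm_le x x'
  rw [norm_sub_rev] at h1
  have h2 : ‖x‖ ≤ ‖x'‖ + r / 2 := by
    have := abs_le.mp h1
    linarith [this.2]
  nlinarith [norm_nonneg x, norm_nonneg x', sq_nonneg (‖x'‖ - r)]

set_option maxHeartbeats 2000000 in
/-- **Gradient bound for the scattering function.**
Under the same hypotheses on the scattering function `w` (integral
representation with `0 ≤ 1 - w ≤ 1`), there exists `C` depending only on `V`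
such that `|∇w(x)| ≤ C / (N hb² (|x|² + N^{-2β}))` for all `x`. -/
theorem scattering_function_gradient_bound
    (V : EuclideanSpace ℝ (Fin 3) → ℝ)
    (hV_smooth : ContDiff ℝ (⊤ : ℕ∞) V)
    (hV_nonneg : ∀ x, 0 ≤ V x)
    (hV_supp : HasCompactSupport V)
    (hV_rad : ∀ x y : EuclideanSpace ℝ (Fin 3), ‖x‖ = ‖y‖ → V x = V y)
    (c₀ : ℝ) (hc₀ : 0 < c₀) :
    ∃ C > 0, ∀ (N hb β : ℝ), 1 ≤ N → 0 < hb → β ∈ Set.Ioo (0 : ℝ) 1 →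
      ∀ w : EuclideanSpace ℝ (Fin 3) → ℝ,
        Differentiable ℝ w →
        (∀ x, 0 ≤ 1 - w x ∧ 1 - w x ≤ 1) →
        (∀ x, w x = c₀ / (2 * N * hb ^ 2) *
            ∫ y, (1 / ‖x - y‖) * (N ^ (3 * β) * V ((N ^ β : ℝ) • y)) * (1 - w y)) →
        ∀ x, ‖fderiv ℝ w x‖ ≤ C / (N * hb ^ 2 * (‖x‖ ^ 2 + N ^ (-(2 * β)))) := by
  classical
  obtain ⟨R₀, hR₀⟩ := hV_supp.isBounded.subset_closedBall (0 : E3)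
  set R : ℝ := max R₀ 1 with hRdef
  have hR1 : (1:ℝ) ≤ R := le_max_right _ _
  have hRpos : (0:ℝ) < R := lt_of_lt_of_le one_pos hR1
  have hsuppR : tsupport V ⊆ Metric.closedBall 0 R :=
    hR₀.trans (Metric.closedBall_subset_closedBall (le_max_left _ _))
  obtain ⟨M₀, hM₀⟩ := hV_supp.exists_bound_of_continuous hV_smooth.continuous
  set M : ℝ := M₀ + 1 with hMdef
  have hM0 : (0:ℝ) ≤ M₀ := le_trans (norm_nonneg (V 0)) (hM₀ 0)
  have hMpos : (0:ℝ) < M := by simp only [hMdef]; linarith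
  have hM1 : ∀ y, V y ≤ M := fun y =>
    le_trans (le_trans (le_abs_self _) (hM₀ y)) (by simp [hMdef])
  set v : ℝ := (volume (Metric.ball (0:E3) 1)).toReal with hvdef
  have hv : 0 < v :=
    ENNReal.toReal_pos (measure_ball_pos volume (0:E3) one_pos).ne' measure_ball_lt_top.ne
  refine ⟨135 * c₀ * M * v * R ^ 3, by positivity, ?_⟩
  intro N hb β hN hhb hβ w hw_diff hw01 hw_rep x
  have hN0 : (0:ℝ) < N := lt_of_lt_of_le one_pos hN
  have hβ0 : (0:ℝ) < β := hβ.1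
  set r : ℝ := R * N ^ (-β) with hrdef
  have hNβ : (0:ℝ) < N ^ (-β) := Real.rpow_pos_of_pos hN0 _
  have hr : 0 < r := by positivity
  have hNβ1 : N ^ (-β) ≤ 1 := Real.rpow_le_one_of_one_le_of_nonpos hN (by linarith)
  have hsq : N ^ (-(2*β)) = (N ^ (-β)) ^ 2 := by
    rw [← Real.rpow_natCast (N ^ (-β)) 2, ← Real.rpow_mul hN0.le]
    norm_num
    ring_nf
  have hr2 : N ^ (-(2*β)) ≤ r ^ 2 := by
    rw [hsq, hrdef]
    have h1 : (1:ℝ) ≤ R ^ 2 := by nlinarith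
    nlinarith [mul_le_mul_of_nonneg_right h1 (sq_nonneg (N ^ (-β)))]
  have hden : (0:ℝ) < ‖x‖ ^ 2 + N ^ (-(2*β)) := by
    have : (0:ℝ) < N ^ (-(2*β)) := Real.rpow_pos_of_pos hN0 _
    positivity
  -- support of the scaled potential
  have hVy0 : ∀ y : E3, y ∉ Metric.closedBall (0:E3) r → V ((N ^ β : ℝ) • y) = 0 := by
    intro y hy
    apply image_eq_zero_of_notMem_tsupport
    intro hmem
    have h1 : ‖(N ^ β : ℝ) • y‖ ≤ R := mem_closedBall_zero_iff.mp (hsuppR hmem)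
    have hNβp : (0:ℝ) < N ^ β := Real.rpow_pos_of_pos hN0 β
    have h2 : ‖(N ^ β : ℝ) • y‖ = N ^ β * ‖y‖ := by
      rw [norm_smul, Real.norm_eq_abs, abs_of_pos hNβp]
    have h3 : r < ‖y‖ := by
      simpa [Metric.mem_closedBall, dist_zero_right, not_le] using hy
    have h4 : N ^ β * r = R := by
      rw [hrdef, mul_comm R _, ← mul_assoc, ← Real.rpow_add hN0]
      simp
    nlinarith
  set c : ℝ := c₀ / (2 * N * hb ^ 2) with hcdef
  have hc : 0 < c := by positivity
  set φ : E3 → E3 → ℝ :=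
    fun z y => (1 / ‖z - y‖) * (N ^ (3 * β) * V ((N ^ β : ℝ) • y)) * (1 - w y) with hφdef
  have hw_rep' : ∀ z, w z = c * ∫ y, φ z y := fun z => hw_rep z
  have hN3β : (0:ℝ) < N ^ (3*β) := Real.rpow_pos_of_pos hN0 _
  have hφ0 : ∀ z y, y ∉ Metric.closedBall (0:E3) r → φ z y = 0 := by
    intro z y hy
    simp [hφdef, hVy0 y hy]
  have hφnonneg : ∀ z y, 0 ≤ φ z y := by
    intro z y
    exact mul_nonneg (mul_nonneg (by positivity)
      (mul_nonneg hN3β.le (hV_nonneg _))) (hw01 y).1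
  -- measurability
  have hφm : ∀ z, AEStronglyMeasurable (φ z) volume := by
    intro z
    apply Measurable.aestronglyMeasurable
    refine Measurable.mul (Measurable.mul ?_ ?_) ?_
    · exact measurable_const.div ((continuous_const.sub continuous_id).norm.measurable)
    · exact measurable_const.mul
        ((hV_smooth.continuous.comp (continuous_id.const_smul ((N:ℝ) ^ β))).measurable)
    · exact (continuous_const.sub hw_diff.continuous).measurable
  -- pointwise bound
  have hφbd : ∀ z y, ‖φ z y‖ ≤ N ^ (3*β) * M * ((‖z - y‖ ^ 2)⁻¹ + 1) := by
    intro z y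
    rw [Real.norm_of_nonneg (hφnonneg z y)]
    have h1 : (1 : ℝ) / ‖z - y‖ ≤ (‖z - y‖ ^ 2)⁻¹ + 1 := by
      rw [one_div]
      exact my_inv_le_inv_sq_add_one (norm_nonneg _)
    have h2 : N ^ (3*β) * V ((N ^ β : ℝ) • y) ≤ N ^ (3*β) * M :=
      mul_le_mul_of_nonneg_left (hM1 _) hN3β.le
    calc (1 / ‖z - y‖) * (N ^ (3*β) * V ((N ^ β : ℝ) • y)) * (1 - w y)
        ≤ (1 / ‖z - y‖) * (N ^ (3*β) * V ((N ^ β : ℝ) • y)) * 1 := by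
          apply mul_le_mul_of_nonneg_left (hw01 y).2
          exact mul_nonneg (by positivity) (mul_nonneg hN3β.le (hV_nonneg _))
    _ = (1 / ‖z - y‖) * (N ^ (3*β) * V ((N ^ β : ℝ) • y)) := by ring
    _ ≤ ((‖z - y‖ ^ 2)⁻¹ + 1) * (N ^ (3*β) * M) := by
          apply mul_le_mul h1 h2 (mul_nonneg hN3β.le (hV_nonneg _))
          positivity
    _ = N ^ (3*β) * M * ((‖z - y‖ ^ 2)⁻¹ + 1) := by ring
  -- integrability
  have hφint : ∀ z, Integrable (φ z) volume := by
    intro z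
    have hind : φ z = (Metric.closedBall (0:E3) r).indicator (φ z) := by
      funext y
      by_cases h : y ∈ Metric.closedBall (0:E3) r
      · simp [indicator, h]
      · simp [indicator, h, hφ0 z y h]
    rw [hind, integrable_indicator_iff measurableSet_closedBall]
    refine Integrable.mono' ?_ (hφm z).restrict (ae_of_all _ fun y => hφbd z y)
    exact ((my_I2_integrable z hr).add
      (integrableOn_const measure_closedBall_lt_top.ne)).const_mul _
  -- constants
  have hCpos : (0:ℝ) < 135 * c₀ * M * v * R ^ 3 :=
    mul_pos (mul_pos (mul_pos (mul_pos (by norm_num) hc₀) hMpos) hv) (pow_pos hRpos 3)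
  have hdenpos : (0:ℝ) < N * hb ^ 2 * (‖x‖ ^ 2 + N ^ (-(2*β))) :=
    mul_pos (mul_pos hN0 (pow_pos hhb 2)) hden
  have hN3r : N ^ (3*β) * r ^ 3 = R ^ 3 := by
    have h1 : N ^ (3*β) * (N ^ (-β)) ^ 3 = 1 := by
      rw [← Real.rpow_natCast (N ^ (-β)) 3, ← Real.rpow_mul hN0.le, ← Real.rpow_add hN0]
      convert Real.rpow_zero N using 2
      push_cast
      ring
    calc N ^ (3*β) * (R * N ^ (-β)) ^ 3 = R ^ 3 * (N ^ (3*β) * (N ^ (-β)) ^ 3) := by ring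
    _ = R ^ 3 := by rw [h1, mul_one]
  -- lipschitz bound
  refine HasFDerivAt.le_of_lip' (hw_diff x).hasFDerivAt
    (div_nonneg hCpos.le hdenpos.le) ?_
  filter_upwards [Metric.ball_mem_nhds x (half_pos hr)] with x' hx'
  have hxx : ‖x' - x‖ ≤ r / 2 := le_of_lt (by rwa [Metric.mem_ball, dist_eq_norm] at hx')
  have hI2x := my_I2_bound x hr
  have hI2x' := my_I2_bound x' hr
  have hfive := my_fivebound x x' hr hxx
  have hrx : (0:ℝ) < r ^ 2 + ‖x‖ ^ 2 := by positivity
  have hrx' : (0:ℝ) < r ^ 2 + ‖x'‖ ^ 2 := by positivity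
  have hI2x'2 : ∫ y in Metric.closedBall (0:E3) r, (‖x' - y‖ ^ 2)⁻¹ ≤
      225 * v * r ^ 3 / (r ^ 2 + ‖x‖ ^ 2) := by
    refine hI2x'.trans ?_
    rw [div_le_div_iff₀ hrx' hrx]
    have hvr : (0:ℝ) ≤ 45 * (v * r ^ 3) := by
      have : (0:ℝ) ≤ v * r ^ 3 := mul_nonneg hv.le (by positivity)
      linarith
    linarith [mul_le_mul_of_nonneg_left hfive hvr]
  have h1 : ∀ᵐ y : E3, y ≠ x := by
    simpa using (countable_singleton x).ae_notMem (volume : Measure E3)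
  have h2 : ∀ᵐ y : E3, y ≠ x' := by
    simpa using (countable_singleton x').ae_notMem (volume : Measure E3)
  have hcoefnn : (0:ℝ) ≤ N ^ (3*β) * M * ‖x' - x‖ / 2 := by
    have := norm_nonneg (x' - x)
    have := hMpos.le
    positivity
  have hptwise : ∀ᵐ y : E3, y ∈ Metric.closedBall (0:E3) r →
      ‖φ x' y - φ x y‖ ≤
        (N ^ (3*β) * M * ‖x' - x‖ / 2) * ((‖x - y‖ ^ 2)⁻¹ + (‖x' - y‖ ^ 2)⁻¹) := by
    filter_upwards [h1, h2] with y hy1 hy2 _hmem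
    have hk := my_kernel_diff x x' y hy1 hy2
    have heq : φ x' y - φ x y = (‖x' - y‖⁻¹ - ‖x - y‖⁻¹) *
        ((N ^ (3*β) * V ((N ^ β : ℝ) • y)) * (1 - w y)) := by
      simp only [hφdef, one_div]
      ring
    have hABnn : (0:ℝ) ≤ (N ^ (3*β) * V ((N ^ β : ℝ) • y)) * (1 - w y) :=
      mul_nonneg (mul_nonneg hN3β.le (hV_nonneg _)) (hw01 y).1
    have hABle : (N ^ (3*β) * V ((N ^ β : ℝ) • y)) * (1 - w y) ≤ N ^ (3*β) * M := by
      calc (N ^ (3*β) * V ((N ^ β : ℝ) • y)) * (1 - w y)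
          ≤ (N ^ (3*β) * V ((N ^ β : ℝ) • y)) * 1 :=
            mul_le_mul_of_nonneg_left (hw01 y).2 (mul_nonneg hN3β.le (hV_nonneg _))
      _ = N ^ (3*β) * V ((N ^ β : ℝ) • y) := mul_one _
      _ ≤ N ^ (3*β) * M := mul_le_mul_of_nonneg_left (hM1 _) hN3β.le
    rw [heq, Real.norm_eq_abs, abs_mul, abs_of_nonneg hABnn]
    calc |‖x' - y‖⁻¹ - ‖x - y‖⁻¹| * ((N ^ (3*β) * V ((N ^ β : ℝ) • y)) * (1 - w y))
        ≤ (‖x' - x‖ * (((‖x - y‖ ^ 2)⁻¹ + (‖x' - y‖ ^ 2)⁻¹) / 2)) * (N ^ (3*β) * M) :=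
          mul_le_mul hk hABle hABnn (by positivity)
    _ = (N ^ (3*β) * M * ‖x' - x‖ / 2) * ((‖x - y‖ ^ 2)⁻¹ + (‖x' - y‖ ^ 2)⁻¹) := by ring
  have hrep : w x' - w x = c * ∫ y, (φ x' y - φ x y) := by
    rw [integral_sub (hφint x') (hφint x), mul_sub, ← hw_rep' x', ← hw_rep' x]
  have hstep : ‖w x' - w x‖ ≤
      c * ((N ^ (3*β) * M * ‖x' - x‖ / 2) *
        ((∫ y in Metric.closedBall (0:E3) r, (‖x - y‖ ^ 2)⁻¹) +
         ∫ y in Metric.closedBall (0:E3) r, (‖x' - y‖ ^ 2)⁻¹)) := by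
    calc ‖w x' - w x‖ = c * ‖∫ y, (φ x' y - φ x y)‖ := by
          rw [hrep, norm_mul, Real.norm_of_nonneg hc.le]
    _ ≤ c * ∫ y, ‖φ x' y - φ x y‖ :=
          mul_le_mul_of_nonneg_left (norm_integral_le_integral_norm _) hc.le
    _ = c * ∫ y in Metric.closedBall (0:E3) r, ‖φ x' y - φ x y‖ := by
          rw [setIntegral_eq_integral_of_forall_compl_eq_zero
            (fun y hy => by simp [hφ0 x' y hy, hφ0 x y hy])]
    _ ≤ c * ∫ y in Metric.closedBall (0:E3) r,
          (N ^ (3*β) * M * ‖x' - x‖ / 2) * ((‖x - y‖ ^ 2)⁻¹ + (‖x' - y‖ ^ 2)⁻¹) := by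
          refine mul_le_mul_of_nonneg_left ?_ hc.le
          refine setIntegral_mono_on_ae ((hφint x').sub (hφint x)).norm.integrableOn
            (((my_I2_integrable x hr).add (my_I2_integrable x' hr)).const_mul _)
            measurableSet_closedBall hptwise
    _ = c * ((N ^ (3*β) * M * ‖x' - x‖ / 2) *
          ((∫ y in Metric.closedBall (0:E3) r, (‖x - y‖ ^ 2)⁻¹) +
           ∫ y in Metric.closedBall (0:E3) r, (‖x' - y‖ ^ 2)⁻¹)) := by
          rw [integral_const_mul, integral_add (my_I2_integrable x hr) (my_I2_integrable x' hr)]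
  have hstep2 : ‖w x' - w x‖ ≤
      c * ((N ^ (3*β) * M * ‖x' - x‖ / 2) * (270 * v * r ^ 3 / (r ^ 2 + ‖x‖ ^ 2))) := by
    refine hstep.trans (mul_le_mul_of_nonneg_left ?_ hc.le)
    refine mul_le_mul_of_nonneg_left ?_ hcoefnn
    calc (∫ y in Metric.closedBall (0:E3) r, (‖x - y‖ ^ 2)⁻¹) +
           ∫ y in Metric.closedBall (0:E3) r, (‖x' - y‖ ^ 2)⁻¹
        ≤ 45 * v * r ^ 3 / (r ^ 2 + ‖x‖ ^ 2) + 225 * v * r ^ 3 / (r ^ 2 + ‖x‖ ^ 2) :=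
          add_le_add hI2x hI2x'2
    _ = 270 * v * r ^ 3 / (r ^ 2 + ‖x‖ ^ 2) := by ring
  have heqA : c * ((N ^ (3*β) * M * ‖x' - x‖ / 2) * (270 * v * r ^ 3 / (r ^ 2 + ‖x‖ ^ 2)))
      = (135 * c₀ * M * v * (N ^ (3*β) * r ^ 3) * ‖x' - x‖) /
          (2 * (N * hb ^ 2 * (r ^ 2 + ‖x‖ ^ 2))) := by
    rw [hcdef]
    have hbne : hb ≠ 0 := hhb.ne'
    have hNne : N ≠ 0 := hN0.ne'
    have hrxne : r ^ 2 + ‖x‖ ^ 2 ≠ 0 := hrx.ne'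
    field_simp
    ring
  rw [hN3r] at heqA
  refine hstep2.trans ?_
  rw [heqA, div_mul_eq_mul_div]
  refine div_le_div_of_nonneg_left (mul_nonneg hCpos.le (norm_nonneg _)) hdenpos ?_
  have hX : (0:ℝ) < N * hb ^ 2 * (r ^ 2 + ‖x‖ ^ 2) :=
    mul_pos (mul_pos hN0 (pow_pos hhb 2)) hrx
  have hY : N * hb ^ 2 * (‖x‖ ^ 2 + N ^ (-(2*β))) ≤ N * hb ^ 2 * (r ^ 2 + ‖x‖ ^ 2) := by
    refine mul_le_mul_of_nonneg_left ?_ (by positivity)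
    linarith
  linarith
end
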